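/- arXiv:0707.3188 — 3 statements merged into one kernel-verified Lean document; each statement's English description precedes it below -/
import Mathlib

section
/- There exists a constant C = C(d) > 0 such that for every spherically symmetric Schwartz function f : ℝ^d → ℂ and every x ∈ ℝ^d one has |x|^{d-1} |f(x)|^2 ≤ C ‖f‖_{L²(ℝ^d)} ‖∇f‖_{L²(ℝ^d)}. -/
/-!
Write `f x = g ‖x‖` with `g` a Schwartz function on `ℝ`. Integrating the derivative of
`s ^ (d - 1) * ‖g s‖ ^ 2` over `[r, ∞)` and dropping the nonnegative term
`(d - 1) s ^ (d - 2) ‖g s‖ ^ 2` gives `r ^ (d - 1) ‖g r‖ ^ 2 ≤ 2 ∫₀^∞ s ^ (d - 1) ‖g‖ ‖g'‖`.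
In polar coordinates the right-hand side is `2 / (d |B₁|) ∫ ‖f y‖ ‖g' ‖y‖‖ dy`, and
`‖g' ‖y‖‖ ≤ ‖Df y‖`, so Cauchy–Schwarz in `L²(ℝ^d)` concludes.
-/

open MeasureTheory Metric Set Filter Topology Module

theorem ContinuousLinearMap.norm_sq_le_sum_norm_apply_sq {ι E F : Type*} [Fintype ι]
    [NormedAddCommGroup E] [InnerProductSpace ℝ E] [NormedAddCommGroup F] [NormedSpace ℝ F]
    (b : OrthonormalBasis ι ℝ E) (T : E →L[ℝ] F) : ‖T‖ ^ 2 ≤ ∑ i, ‖T (b i)‖ ^ 2 := by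
  refine (Real.le_sqrt (norm_nonneg T) (by positivity)).1 <| T.opNorm_le_bound (by positivity)
    fun x => ?_
  calc ‖T x‖ = ‖∑ i, inner ℝ (b i) x • T (b i)‖ := by
        conv_lhs => rw [← b.sum_repr' x]
        simp only [map_sum, map_smul]
    _ ≤ ∑ i, ‖inner ℝ (b i) x‖ * ‖T (b i)‖ :=
      (norm_sum_le _ _).trans_eq (by simp only [norm_smul])
    _ ≤ √(∑ i, ‖inner ℝ (b i) x‖ ^ 2) * √(∑ i, ‖T (b i)‖ ^ 2) :=
      Real.sum_mul_le_sqrt_mul_sqrt _ _ _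
    _ = √(∑ i, ‖T (b i)‖ ^ 2) * ‖x‖ := by
      rw [b.sum_sq_norm_inner_right, Real.sqrt_sq (norm_nonneg x), mul_comm]

theorem integral_norm_mul_norm_le_L2_mul_L2 {α F G : Type*} [MeasurableSpace α] {μ : Measure α}
    [NormedAddCommGroup F] [NormedAddCommGroup G] {f : α → F} {g : α → G}
    (hf : MemLp f 2 μ) (hg : MemLp g 2 μ) :
    ∫ a, ‖f a‖ * ‖g a‖ ∂μ ≤
      (∫ a, ‖f a‖ ^ 2 ∂μ) ^ (1 / 2 : ℝ) * (∫ a, ‖g a‖ ^ 2 ∂μ) ^ (1 / 2 : ℝ) := by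
  have := integral_mul_norm_le_Lp_mul_Lq Real.HolderConjugate.two_two
    (by simpa using hf.norm) (by simpa using hg.norm) (μ := μ)
  simpa only [norm_norm, Real.rpow_two] using this

theorem exists_norm_eq_one_norm_smul_eq {E : Type*} [NormedAddCommGroup E] [NormedSpace ℝ E]
    [Nontrivial E] (y : E) : ∃ u : E, ‖u‖ = 1 ∧ ‖y‖ • u = y := by
  rcases eq_or_ne y 0 with rfl | hy
  · obtain ⟨u, hu⟩ := exists_norm_eq E zero_le_one
    exact ⟨u, hu, by simp⟩
  · exact ⟨‖y‖⁻¹ • y, norm_smul_inv_norm hy, smul_inv_smul₀ (norm_ne_zero_iff.2 hy) y⟩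

theorem Metric.measureReal_ball_pos {X : Type*} [PseudoMetricSpace X] [ProperSpace X]
    [MeasurableSpace X] (μ : Measure X) [μ.IsOpenPosMeasure] [IsFiniteMeasureOnCompacts μ]
    (x : X) {r : ℝ} (hr : 0 < r) : 0 < μ.real (ball x r) :=
  ENNReal.toReal_pos (measure_ball_pos μ x hr).ne' measure_ball_lt_top.ne

namespace SchwartzMap

theorem integrable_norm_sq {E F : Type*} [NormedAddCommGroup E] [NormedSpace ℝ E]
    [NormedAddCommGroup F] [NormedSpace ℝ F] [MeasurableSpace E] [BorelSpace E]
    [SecondCountableTopology E] {μ : Measure E} [μ.HasTemperateGrowth] (f : 𝓢(E, F)) :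
    Integrable (fun x => ‖f x‖ ^ 2) μ :=
  (memLp_two_iff_integrable_sq_norm f.continuous.aestronglyMeasurable).1 (f.memLp 2 μ)

section RealLine

variable {F G : Type*} [NormedAddCommGroup F] [NormedSpace ℝ F] [NormedAddCommGroup G]
  [NormedSpace ℝ G]

theorem integrable_norm_pow_mul_norm_mul_norm (g : 𝓢(ℝ, F)) (h : 𝓢(ℝ, G)) (k : ℕ) :
    Integrable fun s : ℝ => ‖s‖ ^ k * (‖g s‖ * ‖h s‖) := by
  simpa only [mul_assoc] using (g.integrable_pow_mul volume k).mul_bdd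
    h.continuous.norm.aestronglyMeasurable
    (ae_of_all _ fun s => by simpa using h.toBoundedContinuousFunction.norm_coe_le_norm s)

theorem tendsto_pow_mul_norm_sq_atTop (g : 𝓢(ℝ, F)) (k : ℕ) :
    Tendsto (fun s : ℝ => s ^ k * ‖g s‖ ^ 2) atTop (𝓝 0) := by
  obtain ⟨C, -, hC⟩ := g.decay (k + 1) 0
  have hdecay : Tendsto (fun s : ℝ => s ^ k * ‖g s‖) atTop (𝓝 0) := by
    refine squeeze_zero' (g := fun s => C / s)
      (eventually_ge_atTop 0 |>.mono fun s hs => by positivity)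
      ((eventually_gt_atTop 0).mono fun s hs => ?_) (tendsto_const_nhds.div_atTop tendsto_id)
    rw [le_div_iff₀ hs]
    simpa [abs_of_pos hs, pow_succ, mul_right_comm] using hC s
  simpa [sq, ← mul_assoc] using hdecay.zero_mul_isBoundedUnder_le (isBoundedUnder_of
    ⟨_, fun s => by simpa using g.toBoundedContinuousFunction.norm_coe_le_norm s⟩)

variable {H : Type*} [NormedAddCommGroup H] [InnerProductSpace ℝ H]

theorem pow_mul_norm_sq_le_two_mul_integral (g : 𝓢(ℝ, H)) (k : ℕ) {r : ℝ} (hr : 0 ≤ r) :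
    r ^ k * ‖g r‖ ^ 2 ≤ 2 * ∫ s in Ioi 0, s ^ k * (‖g s‖ * ‖deriv g s‖) := by
  set g' := derivCLM ℝ H g
  have hg' : deriv g = g' := funext fun s => (derivCLM_apply ℝ g s).symm
  rw [hg']
  set φ' : ℝ → ℝ := fun s => k * s ^ (k - 1) * ‖g s‖ ^ 2 + s ^ k * (2 * inner ℝ (g s) (g' s))
  have hφ : ∀ s, HasDerivAt (fun s => s ^ k * ‖g s‖ ^ 2) (φ' s) s := fun s =>
    (hasDerivAt_pow k s).mul (hg' ▸ g.differentiableAt.hasDerivAt).norm_sq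
  have hφ'_int : Integrable φ' := by
    refine (((g.integrable_norm_pow_mul_norm_mul_norm g (k - 1)).const_mul k).add
      ((g.integrable_norm_pow_mul_norm_mul_norm g' k).const_mul 2)).mono' ?_
      (ae_of_all _ fun s => ?_)
    · exact Continuous.aestronglyMeasurable (by fun_prop)
    · have := abs_real_inner_le_norm (g s) (g' s)
      refine (norm_add_le _ _).trans ?_
      simp only [norm_mul, norm_pow, Real.norm_natCast, norm_norm, Real.norm_ofNat]
      calc _ = k * (‖s‖ ^ (k - 1) * (‖g s‖ * ‖g s‖))
              + 2 * (‖s‖ ^ k * |inner ℝ (g s) (g' s)|) := by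
            rw [Real.norm_eq_abs (inner ℝ _ _)]; ring
        _ ≤ _ := by dsimp only [Pi.add_apply]; gcongr
  have hψ_int : Integrable fun s => s ^ k * (‖g s‖ * ‖g' s‖) :=
    (g.integrable_norm_pow_mul_norm_mul_norm g' k).mono (Continuous.aestronglyMeasurable
      (by fun_prop)) (ae_of_all _ fun s => by simp only [norm_mul, norm_pow, norm_norm, le_refl])
  have hftc := integral_Ioi_of_hasDerivAt_of_tendsto' (a := r) (fun s _ => hφ s)
    hφ'_int.integrableOn (g.tendsto_pow_mul_norm_sq_atTop k)
  calc r ^ k * ‖g r‖ ^ 2 = ∫ s in Ioi r, -φ' s := by rw [integral_neg, hftc]; ring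
    _ ≤ ∫ s in Ioi r, 2 * (s ^ k * (‖g s‖ * ‖g' s‖)) := by
      refine setIntegral_mono_on hφ'_int.neg.integrableOn (hψ_int.const_mul 2).integrableOn
        measurableSet_Ioi fun s (hs : r < s) => ?_
      have hs : 0 < s := hr.trans_lt hs
      have hinner := neg_le_of_abs_le (abs_real_inner_le_norm (g s) (g' s))
      have : 0 ≤ k * s ^ (k - 1) * ‖g s‖ ^ 2 := by positivity
      nlinarith [mul_le_mul_of_nonneg_left hinner (pow_nonneg hs.le k)]
    _ ≤ ∫ s in Ioi 0, 2 * (s ^ k * (‖g s‖ * ‖g' s‖)) :=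
      setIntegral_mono_set (hψ_int.const_mul 2).integrableOn
        ((ae_restrict_iff' measurableSet_Ioi).2 (ae_of_all _ fun s (hs : 0 < s) => by positivity))
        (Ioi_subset_Ioi hr).eventuallyLE
    _ = 2 * ∫ s in Ioi 0, s ^ k * (‖g s‖ * ‖g' s‖) := integral_const_mul 2 _

end RealLine

section Radial

variable {E F : Type*} [NormedAddCommGroup E] [NormedSpace ℝ E] [Nontrivial E]
  [NormedAddCommGroup F] [NormedSpace ℝ F]

theorem exists_profile_of_radial (f : 𝓢(E, F)) (hf : ∀ x y : E, ‖x‖ = ‖y‖ → f x = f y) :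
    ∃ g : 𝓢(ℝ, F), ∀ u : E, ‖u‖ = 1 → ∀ s : ℝ, f (s • u) = g s := by
  obtain ⟨e, he⟩ := exists_norm_eq E zero_le_one
  let L := LinearIsometry.toSpanSingleton ℝ E he
  refine ⟨compCLMOfAntilipschitz ℝ L.toContinuousLinearMap.hasTemperateGrowth
    L.antilipschitz f, fun u hu s => hf _ _ ?_⟩
  simp [L, norm_smul, hu, he]

theorem eq_profile_norm {f : 𝓢(E, F)} {g : 𝓢(ℝ, F)}
    (hg : ∀ u : E, ‖u‖ = 1 → ∀ s : ℝ, f (s • u) = g s) (y : E) : f y = g ‖y‖ := by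
  obtain ⟨u, hu, hy⟩ := exists_norm_eq_one_norm_smul_eq y
  rw [← hg u hu, hy]

theorem norm_deriv_profile_le {f : 𝓢(E, F)} {g : 𝓢(ℝ, F)}
    (hg : ∀ u : E, ‖u‖ = 1 → ∀ s : ℝ, f (s • u) = g s) (y : E) :
    ‖deriv g ‖y‖‖ ≤ ‖fderiv ℝ f y‖ := by
  obtain ⟨u, hu, hy⟩ := exists_norm_eq_one_norm_smul_eq y
  have hderiv : HasDerivAt g (fderiv ℝ f y u) ‖y‖ := by
    have : HasDerivAt (fun s : ℝ => f (s • u)) (fderiv ℝ f (‖y‖ • u) u) ‖y‖ :=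
      f.differentiableAt.hasFDerivAt.comp_hasDerivAt ‖y‖
        (by simpa using (hasDerivAt_id ‖y‖).smul_const u)
    rwa [funext (hg u hu), hy] at this
  simpa [hderiv.deriv, hu] using (fderiv ℝ f y).le_opNorm u

theorem pow_finrank_sub_one_mul_norm_sq_le_of_radial {H : Type*} [NormedAddCommGroup H]
    [InnerProductSpace ℝ H] [FiniteDimensional ℝ E] [MeasurableSpace E] [BorelSpace E]
    (μ : Measure E) [μ.IsAddHaarMeasure] (f : 𝓢(E, H))
    (hf : ∀ x y : E, ‖x‖ = ‖y‖ → f x = f y) (x : E) :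
    ‖x‖ ^ (finrank ℝ E - 1) * ‖f x‖ ^ 2 ≤
      2 / (finrank ℝ E * μ.real (ball 0 1)) * (∫ y, ‖f y‖ ^ 2 ∂μ) ^ (1 / 2 : ℝ) *
        (∫ y, ‖fderiv ℝ f y‖ ^ 2 ∂μ) ^ (1 / 2 : ℝ) := by
  obtain ⟨g, hg⟩ := f.exists_profile_of_radial hf
  set κ := (finrank ℝ E : ℝ) * μ.real (ball 0 1)
  have hκ : 0 < κ := mul_pos (Nat.cast_pos.2 finrank_pos) (measureReal_ball_pos μ 0 one_pos)
  have hpolar : ∫ y, ‖f y‖ * ‖deriv g ‖y‖‖ ∂μ =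
      κ * ∫ s in Ioi 0, s ^ (finrank ℝ E - 1) * (‖g s‖ * ‖deriv g s‖) := by
    simp_rw [eq_profile_norm hg]
    rw [integral_fun_norm_addHaar μ fun s => ‖g s‖ * ‖deriv g s‖, nsmul_eq_mul, smul_eq_mul,
      mul_assoc]
    simp_rw [smul_eq_mul]
  have hDf : MemLp (fderiv ℝ f) 2 μ := (fderivCLM ℝ E H f).memLp 2 μ
  calc ‖x‖ ^ (finrank ℝ E - 1) * ‖f x‖ ^ 2
      ≤ 2 * ∫ s in Ioi 0, s ^ (finrank ℝ E - 1) * (‖g s‖ * ‖deriv g s‖) := by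
        rw [eq_profile_norm hg x]
        exact g.pow_mul_norm_sq_le_two_mul_integral _ (norm_nonneg x)
    _ = 2 / κ * ∫ y, ‖f y‖ * ‖deriv g ‖y‖‖ ∂μ := by
        rw [hpolar]; field_simp [hκ.ne']
    _ ≤ 2 / κ * ∫ y, ‖f y‖ * ‖fderiv ℝ f y‖ ∂μ := by
        refine mul_le_mul_of_nonneg_left (integral_mono_of_nonneg
          (ae_of_all _ fun y => by positivity) ((f.memLp 2 μ).norm.integrable_mul hDf.norm)
          (ae_of_all _ fun y => ?_)) (by positivity)
        exact mul_le_mul_of_nonneg_left (norm_deriv_profile_le hg y) (norm_nonneg _)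
    _ ≤ _ := by
        rw [mul_assoc]
        gcongr
        exact integral_norm_mul_norm_le_L2_mul_L2 (f.memLp 2 μ) hDf

end Radial

theorem integral_norm_fderiv_sq_le_integral_sum {ι F : Type*} [Fintype ι] [DecidableEq ι]
    [NormedAddCommGroup F] [NormedSpace ℝ F] (f : 𝓢(EuclideanSpace ℝ ι, F)) :
    ∫ y, ‖fderiv ℝ f y‖ ^ 2 ≤ ∫ y, ∑ i, ‖fderiv ℝ f y (EuclideanSpace.single i 1)‖ ^ 2 := by
  refine integral_mono (fderivCLM ℝ _ F f).integrable_norm_sq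
    (integrable_finsetSum _ fun i _ => ?_) fun y => ?_
  · simpa only [lineDerivOp_apply_eq_fderiv] using
      (LineDeriv.lineDerivOp (EuclideanSpace.single i (1 : ℝ)) f).integrable_norm_sq
  · simpa only [EuclideanSpace.basisFun_apply] using
      (fderiv ℝ f y).norm_sq_le_sum_norm_apply_sq (EuclideanSpace.basisFun ι ℝ)

end SchwartzMap

/-- Radial Sobolev embedding: for spherically symmetric Schwartz `f : ℝ^d → ℂ`,
`|x|^{d-1} |f(x)|² ≤ C ‖f‖_{L²} ‖∇f‖_{L²}`. -/
theorem radial_sobolev_embedding (d : ℕ) (hd : 1 ≤ d) :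
    ∃ C : ℝ, 0 < C ∧
      ∀ f : SchwartzMap (EuclideanSpace ℝ (Fin d)) ℂ,
        (∀ x y : EuclideanSpace ℝ (Fin d), ‖x‖ = ‖y‖ → f x = f y) →
        ∀ x : EuclideanSpace ℝ (Fin d),
          ‖x‖ ^ ((d : ℝ) - 1) * ‖f x‖ ^ 2 ≤
            C * (∫ y : EuclideanSpace ℝ (Fin d), ‖f y‖ ^ 2) ^ ((1 : ℝ) / 2) *
              (∫ y : EuclideanSpace ℝ (Fin d),
                  ∑ i, ‖fderiv ℝ (⇑f) y (EuclideanSpace.single i 1)‖ ^ 2) ^ ((1 : ℝ) / 2) := by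
  have : Nonempty (Fin d) := ⟨⟨0, hd⟩⟩
  refine ⟨2 / (d * volume.real (ball (0 : EuclideanSpace ℝ (Fin d)) 1)), ?_, fun f hf x => ?_⟩
  · exact div_pos two_pos (mul_pos (Nat.cast_pos.2 hd) (measureReal_ball_pos volume 0 one_pos))
  have hgrad := f.integral_norm_fderiv_sq_le_integral_sum
  have key := SchwartzMap.pow_finrank_sub_one_mul_norm_sq_le_of_radial volume f hf x
  rw [finrank_euclideanSpace_fin] at key
  calc ‖x‖ ^ ((d : ℝ) - 1) * ‖f x‖ ^ 2 = ‖x‖ ^ (d - 1) * ‖f x‖ ^ 2 := by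
        rw [← Nat.cast_one, ← Nat.cast_sub hd, Real.rpow_natCast]
    _ ≤ _ := key
    _ ≤ _ := by gcongr
end

section
/- There exists a constant C = C(d) > 0 such that for every N > 0 and every spherically symmetric Schwartz function f : ℝ^d → ℂ whose Fourier transform f̂ is supported in the ball {ξ ∈ ℝ^d : |ξ| ≤ N}, one has |x|^{(d-1)/2} |f(x)| ≤ C N^{1/2} ‖f‖_{L²(ℝ^d)} for every x ∈ ℝ^d. -/
open MeasureTheory

noncomputable section

/-- The Fourier transform `f̂(ξ) = (2π)^{-d/2} ∫ e^{-i x·ξ} f(x) dx`. -/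
def fourierT {d : ℕ} (f : EuclideanSpace ℝ (Fin d) → ℂ) (ξ : EuclideanSpace ℝ (Fin d)) : ℂ :=
  ((2 * Real.pi) ^ (-(d : ℝ) / 2) : ℝ) •
    ∫ x : EuclideanSpace ℝ (Fin d),
      Complex.exp (-Complex.I * ((∑ i, x i * ξ i : ℝ) : ℂ)) * f x

/-!
Along a ray, `‖f(r e)‖² = -∫_r^∞ (d/ds) ‖f(s e)‖² ds ≤ 2 ∫_r^∞ |f| |∂ₛ f| ds`. Multiplying by
`r^{d-1} ≤ s^{d-1}` and using `2|f||∂ₛ f| ≤ N |f|² + N⁻¹ |∇f|²`, polar coordinates turn the right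
hand side into `(N ‖f‖₂² + N⁻¹ ‖∇f‖₂²) / (d |B₁|)` when `f` (hence `|∇f|`) is radial, `|B₁|`
being the volume of the unit ball. By Plancherel, Fourier support in `{|ξ| ≤ N}` gives
Bernstein's inequality `‖∇f‖₂ ≤ N ‖f‖₂`, so `d |B₁| |x|^{d-1} |f(x)|² ≤ 2 N ‖f‖₂²`.
-/

open Real Filter Set SchwartzMap FourierTransform LineDeriv
open scoped Topology

theorem two_mul_mul_le_add_mul_sq {a x y : ℝ} (ha : 0 < a) :
    2 * (x * y) ≤ a * x ^ 2 + a⁻¹ * y ^ 2 := by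
  have h : 0 ≤ a⁻¹ * (a * x - y) ^ 2 := by positivity
  have h' : a⁻¹ * (a * x - y) ^ 2 = a * x ^ 2 - 2 * (x * y) + a⁻¹ * y ^ 2 := by
    field_simp
    ring
  linarith

theorem ContinuousLinearMap.norm_sq_le_sum_norm_sq_apply {ι V F : Type*} [Fintype ι]
    [NormedAddCommGroup V] [InnerProductSpace ℝ V] [NormedAddCommGroup F] [NormedSpace ℝ F]
    (b : OrthonormalBasis ι ℝ V) (L : V →L[ℝ] F) : ‖L‖ ^ 2 ≤ ∑ i, ‖L (b i)‖ ^ 2 := by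
  set S := √(∑ i, ‖L (b i)‖ ^ 2)
  suffices ‖L‖ ≤ S by
    calc ‖L‖ ^ 2 ≤ S ^ 2 := by gcongr
      _ = _ := Real.sq_sqrt (by positivity)
  refine L.opNorm_le_bound (by positivity) fun v => ?_
  calc ‖L v‖ = ‖∑ i, inner ℝ (b i) v • L (b i)‖ := by
        conv_lhs => rw [← b.sum_repr' v]
        simp_rw [map_sum, map_smul]
    _ ≤ ∑ i, |inner ℝ (b i) v| * ‖L (b i)‖ := by
        refine (norm_sum_le _ _).trans_eq ?_
        simp_rw [norm_smul, Real.norm_eq_abs]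
    _ ≤ √(∑ i, |inner ℝ (b i) v| ^ 2) * S := Real.sum_mul_le_sqrt_mul_sqrt _ _ _
    _ = S * ‖v‖ := by
        simp_rw [_root_.sq_abs, b.sum_sq_inner_right, Real.sqrt_sq (norm_nonneg v), mul_comm]

section Radial

theorem eq_comp_norm_smul_of_norm_eq {V α : Type*} [NormedAddCommGroup V] [NormedSpace ℝ V]
    {G : V → α} (hG : ∀ x y : V, ‖x‖ = ‖y‖ → G x = G y) {e : V} (he : ‖e‖ = 1) (x : V) :
    G x = G (‖x‖ • e) :=
  hG _ _ (by rw [norm_smul, he, norm_norm, mul_one])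

theorem norm_fderiv_eq_of_norm_eq {V F : Type*} [NormedAddCommGroup V] [InnerProductSpace ℝ V]
    [NormedAddCommGroup F] [NormedSpace ℝ F]
    {f : V → F} (hf : ∀ x y : V, ‖x‖ = ‖y‖ → f x = f y) {x y : V} (hxy : ‖x‖ = ‖y‖) :
    ‖fderiv ℝ f x‖ = ‖fderiv ℝ f y‖ := by
  set R := (ℝ ∙ (x - y))ᗮ.reflection
  have hfR : f ∘ R = f := funext fun z => hf _ _ (R.norm_map z)
  have h := R.toContinuousLinearEquiv.comp_right_fderiv (f := f) (x := x)
  rw [LinearIsometryEquiv.coe_toContinuousLinearEquiv, hfR, Submodule.reflection_sub hxy] at h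
  rw [h]
  exact ContinuousLinearMap.opNorm_comp_linearIsometryEquiv _ R

variable {V : Type*} [NormedAddCommGroup V] [NormedSpace ℝ V] [FiniteDimensional ℝ V]
  [MeasurableSpace V] [BorelSpace V] [Nontrivial V] (μ : Measure V) [μ.IsAddHaarMeasure]

theorem integral_eq_of_norm_eq {G : V → ℝ} (hG : ∀ x y : V, ‖x‖ = ‖y‖ → G x = G y)
    {e : V} (he : ‖e‖ = 1) :
    ∫ x, G x ∂μ = Module.finrank ℝ V * μ.real (Metric.ball 0 1) *
      ∫ s in Ioi 0, s ^ (Module.finrank ℝ V - 1) * G (s • e) := by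
  rw [integral_congr_ae (.of_forall (eq_comp_norm_smul_of_norm_eq hG he)),
    integral_fun_norm_addHaar μ (fun s => G (s • e))]
  simp only [nsmul_eq_mul, smul_eq_mul, mul_assoc]

theorem integrableOn_Ioi_of_norm_eq {G : V → ℝ} (hG : ∀ x y : V, ‖x‖ = ‖y‖ → G x = G y)
    {e : V} (he : ‖e‖ = 1) (hint : Integrable G μ) :
    IntegrableOn (fun s => s ^ (Module.finrank ℝ V - 1) * G (s • e)) (Ioi 0) := by
  rw [integrable_congr (.of_forall (eq_comp_norm_smul_of_norm_eq hG he))] at hint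
  exact (integrable_fun_norm_addHaar μ (f := fun s => G (s • e))).1 hint

end Radial

namespace SchwartzMap

section Line

variable {E : Type*} [NormedAddCommGroup E] [InnerProductSpace ℝ E]

theorem norm_sq_le_integral_Ioi (u : 𝓢(ℝ, E)) (r : ℝ) :
    ‖u r‖ ^ 2 ≤ ∫ s in Ioi r, 2 * (‖u s‖ * ‖deriv u s‖) := by
  have hmaj : Integrable (fun s => 2 * (‖u s‖ * ‖deriv u s‖)) := by
    refine (((derivCLM ℝ E u).integrable.norm.bdd_mul (c := ‖u.toBoundedContinuousFunction‖)
      u.continuous.norm.aestronglyMeasurable (.of_forall fun s => ?_)).const_mul 2)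
    simpa using u.toBoundedContinuousFunction.norm_coe_le_norm s
  have hint : Integrable (fun s => 2 * inner ℝ (u s) (deriv u s)) := by
    refine hmaj.mono' ((continuous_const.mul (u.continuous.inner
      (derivCLM ℝ E u).continuous)).aestronglyMeasurable) (.of_forall fun s => ?_)
    rw [norm_mul, Real.norm_two, Real.norm_eq_abs]
    gcongr
    exact abs_real_inner_le_norm _ _
  have hlim : Tendsto (fun s => ‖u s‖ ^ 2) atTop (𝓝 0) := by
    simpa using (u.toZeroAtInfty.zero_at_infty'.mono_left atTop_le_cocompact).norm.pow 2
  have hftc := integral_Ioi_of_hasDerivAt_of_tendsto' (a := r)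
    (fun s _ => (u.hasDerivAt s).norm_sq) hint.integrableOn hlim
  calc ‖u r‖ ^ 2 = ∫ s in Ioi r, -(2 * inner ℝ (u s) (deriv u s)) := by
        rw [integral_neg, hftc]; ring
    _ ≤ _ := by
      refine integral_mono hint.integrableOn.neg hmaj.integrableOn fun s => ?_
      linarith [neg_abs_le (inner ℝ (u s) (deriv u s)), abs_real_inner_le_norm (u s) (deriv u s)]

theorem pow_mul_norm_sq_le_integral_Ioi (u : 𝓢(ℝ, E)) {D : ℝ → ℝ}
    (hD : ∀ s, ‖deriv u s‖ ≤ D s) (k : ℕ) {a r : ℝ} (ha : 0 < a) (hr : 0 ≤ r)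
    (hu : IntegrableOn (fun s => s ^ k * ‖u s‖ ^ 2) (Ioi 0))
    (hDint : IntegrableOn (fun s => s ^ k * D s ^ 2) (Ioi 0)) :
    r ^ k * ‖u r‖ ^ 2 ≤
      a * (∫ s in Ioi 0, s ^ k * ‖u s‖ ^ 2) + a⁻¹ * ∫ s in Ioi 0, s ^ k * D s ^ 2 := by
  set W : ℝ → ℝ := fun s => a * (s ^ k * ‖u s‖ ^ 2) + a⁻¹ * (s ^ k * D s ^ 2)
  have hW : IntegrableOn W (Ioi 0) := (hu.const_mul a).add (hDint.const_mul a⁻¹)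
  have hpointwise : ∀ s ∈ Ioi r, r ^ k * (2 * (‖u s‖ * ‖deriv u s‖)) ≤ W s := by
    intro s (hs : r < s)
    have hs₀ : 0 ≤ s := hr.trans hs.le
    calc r ^ k * (2 * (‖u s‖ * ‖deriv u s‖)) ≤ s ^ k * (2 * (‖u s‖ * D s)) := by
          gcongr
          exact hD s
      _ ≤ s ^ k * (a * ‖u s‖ ^ 2 + a⁻¹ * D s ^ 2) := by
          gcongr
          exact two_mul_mul_le_add_mul_sq ha
      _ = W s := by ring
  calc r ^ k * ‖u r‖ ^ 2 ≤ r ^ k * ∫ s in Ioi r, 2 * (‖u s‖ * ‖deriv u s‖) :=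
        mul_le_mul_of_nonneg_left (u.norm_sq_le_integral_Ioi r) (by positivity)
    _ ≤ ∫ s in Ioi r, W s := by
        rw [← integral_const_mul]
        exact integral_mono_of_nonneg (.of_forall fun s => by positivity)
          (hW.mono_set (Ioi_subset_Ioi hr)) ((ae_restrict_mem measurableSet_Ioi).mono hpointwise)
    _ ≤ ∫ s in Ioi 0, W s := by
        refine setIntegral_mono_set hW ?_ (Ioi_subset_Ioi hr).eventuallyLE
        filter_upwards [ae_restrict_mem measurableSet_Ioi] with s (hs : 0 < s)
        positivity
    _ = _ := by
        rw [integral_add (hu.const_mul a) (hDint.const_mul a⁻¹), integral_const_mul,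
          integral_const_mul]

end Line

section Ray

variable {V F : Type*} [NormedAddCommGroup V] [NormedSpace ℝ V]
  [NormedAddCommGroup F] [NormedSpace ℝ F] {e : V}

def restrictLine (f : 𝓢(V, F)) (he : e ≠ 0) : 𝓢(ℝ, F) :=
  compCLMOfAntilipschitz ℝ (ContinuousLinearMap.toSpanSingleton ℝ e).hasTemperateGrowth
    (K := ‖e‖₊⁻¹) ((ContinuousLinearMap.toSpanSingleton ℝ e).antilipschitz_of_bound fun s => by
      rw [ContinuousLinearMap.toSpanSingleton_apply, norm_smul, Real.norm_eq_abs, NNReal.coe_inv,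
        coe_nnnorm, mul_comm |s|, ← mul_assoc, inv_mul_cancel₀ (norm_ne_zero_iff.2 he),
        one_mul]) f

@[simp]
theorem restrictLine_apply (f : 𝓢(V, F)) (he : e ≠ 0) (s : ℝ) :
    f.restrictLine he s = f (s • e) :=
  rfl

theorem deriv_restrictLine (f : 𝓢(V, F)) (he : e ≠ 0) (s : ℝ) :
    deriv (f.restrictLine he) s = fderiv ℝ f (s • e) e := by
  have : HasDerivAt (fun t : ℝ => t • e) e s := by
    simpa using (hasDerivAt_id s).smul_const e
  exact ((f.differentiableAt.hasFDerivAt).comp_hasDerivAt s this).deriv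

end Ray

section Radial

variable {V E : Type*} [NormedAddCommGroup V] [InnerProductSpace ℝ V] [FiniteDimensional ℝ V]
  [MeasurableSpace V] [BorelSpace V] [Nontrivial V] (μ : Measure V) [μ.IsAddHaarMeasure]
  [NormedAddCommGroup E] [InnerProductSpace ℝ E]

theorem pow_mul_norm_sq_le_of_norm_eq (f : 𝓢(V, E)) (hf : ∀ x y : V, ‖x‖ = ‖y‖ → f x = f y)
    {a : ℝ} (ha : 0 < a) (x : V) :
    Module.finrank ℝ V * μ.real (Metric.ball 0 1) *
        (‖x‖ ^ (Module.finrank ℝ V - 1) * ‖f x‖ ^ 2) ≤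
      a * (∫ y, ‖f y‖ ^ 2 ∂μ) + a⁻¹ * ∫ y, ‖fderiv ℝ f y‖ ^ 2 ∂μ := by
  obtain ⟨e, he⟩ := exists_norm_eq V zero_le_one
  have he₀ : e ≠ 0 := norm_ne_zero_iff.1 (he ▸ one_ne_zero)
  have hfsq : ∀ x y : V, ‖x‖ = ‖y‖ → ‖f x‖ ^ 2 = ‖f y‖ ^ 2 := fun x y h => by rw [hf x y h]
  have hDfsq : ∀ x y : V, ‖x‖ = ‖y‖ → ‖fderiv ℝ f x‖ ^ 2 = ‖fderiv ℝ f y‖ ^ 2 :=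
    fun x y h => by rw [norm_fderiv_eq_of_norm_eq hf h]
  have hray := (f.restrictLine he₀).pow_mul_norm_sq_le_integral_Ioi
    (D := fun s => ‖fderiv ℝ f (s • e)‖)
    (fun s => by simpa [deriv_restrictLine, he] using (fderiv ℝ f (s • e)).le_opNorm e)
    (Module.finrank ℝ V - 1) ha (norm_nonneg x)
    (integrableOn_Ioi_of_norm_eq μ hfsq he ((f.memLp 2 μ).integrable_norm_pow two_ne_zero))
    (integrableOn_Ioi_of_norm_eq μ hDfsq he
      (by simpa using ((fderivCLM ℝ V E f).memLp 2 μ).integrable_norm_pow two_ne_zero))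
  simp only [restrictLine_apply, ← eq_comp_norm_smul_of_norm_eq hf he x] at hray
  rw [integral_eq_of_norm_eq μ hfsq he, integral_eq_of_norm_eq μ hDfsq he]
  have hκ : 0 ≤ Module.finrank ℝ V * μ.real (Metric.ball 0 1) := by positivity
  exact (mul_le_mul_of_nonneg_left hray hκ).trans_eq (by ring)

end Radial

theorem integral_norm_sq_fderiv_le_sum {ι V F : Type*} [Fintype ι] [NormedAddCommGroup V]
    [InnerProductSpace ℝ V] [FiniteDimensional ℝ V] [MeasurableSpace V] [BorelSpace V]
    [NormedAddCommGroup F] [NormedSpace ℝ F] (μ : Measure V) [μ.HasTemperateGrowth]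
    (b : OrthonormalBasis ι ℝ V) (f : 𝓢(V, F)) :
    ∫ x, ‖fderiv ℝ f x‖ ^ 2 ∂μ ≤ ∑ i, ∫ x, ‖∂_{b i} f x‖ ^ 2 ∂μ := by
  have hint : ∀ i, Integrable (fun x => ‖∂_{b i} f x‖ ^ 2) μ := fun i =>
    ((∂_{b i} f).memLp 2 μ).integrable_norm_pow two_ne_zero
  rw [← integral_finsetSum _ fun i _ => hint i]
  refine integral_mono_of_nonneg (.of_forall fun x => by positivity)
    (integrable_finsetSum _ fun i _ => hint i) (.of_forall fun x => ?_)
  simpa only [lineDerivOp_apply_eq_fderiv] using (fderiv ℝ f x).norm_sq_le_sum_norm_sq_apply b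

section Bernstein

variable {V H : Type*} [NormedAddCommGroup V] [InnerProductSpace ℝ V] [FiniteDimensional ℝ V]
  [MeasurableSpace V] [BorelSpace V] [NormedAddCommGroup H] [InnerProductSpace ℂ H]

theorem norm_fourier_lineDerivOp (f : 𝓢(V, H)) (m ξ : V) :
    ‖𝓕 (∂_{m} f) ξ‖ = 2 * π * |inner ℝ ξ m| * ‖𝓕 f ξ‖ := by
  have : (inner ℝ · m).HasTemperateGrowth := ((innerSL ℝ).flip m).hasTemperateGrowth
  rw [fourier_lineDerivOp_eq, smul_apply, smulLeftCLM_apply_apply this, norm_smul, norm_smul]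
  simp [Real.norm_eq_abs, abs_of_pos Real.pi_pos, mul_assoc]

theorem sum_integral_norm_sq_lineDerivOp [CompleteSpace H] {ι : Type*} [Fintype ι]
    (b : OrthonormalBasis ι ℝ V) (f : 𝓢(V, H)) :
    ∑ i, ∫ x, ‖∂_{b i} f x‖ ^ 2 = ∫ ξ, (2 * π * ‖ξ‖) ^ 2 * ‖𝓕 f ξ‖ ^ 2 := by
  simp_rw [← integral_norm_sq_fourier (∂_{b _} f)]
  rw [← integral_finsetSum _ fun i _ => ((𝓕 (∂_{b i} f)).memLp 2).integrable_norm_pow two_ne_zero]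
  congr 1 with ξ
  simp_rw [norm_fourier_lineDerivOp, mul_pow, _root_.sq_abs, ← Finset.sum_mul, ← Finset.mul_sum,
    b.sum_sq_inner_left]

theorem integral_norm_sq_fderiv_le_of_fourier_support [CompleteSpace H] (f : 𝓢(V, H)) {M : ℝ}
    (hf : ∀ ξ, 𝓕 f ξ ≠ 0 → 2 * π * ‖ξ‖ ≤ M) :
    ∫ x, ‖fderiv ℝ f x‖ ^ 2 ≤ M ^ 2 * ∫ x, ‖f x‖ ^ 2 := by
  calc ∫ x, ‖fderiv ℝ f x‖ ^ 2 ≤ ∫ ξ, (2 * π * ‖ξ‖) ^ 2 * ‖𝓕 f ξ‖ ^ 2 := by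
        rw [← sum_integral_norm_sq_lineDerivOp (stdOrthonormalBasis ℝ V)]
        exact integral_norm_sq_fderiv_le_sum volume _ f
    _ ≤ ∫ ξ, M ^ 2 * ‖𝓕 f ξ‖ ^ 2 := by
        refine integral_mono_of_nonneg (.of_forall fun ξ => by positivity)
          ((((𝓕 f).memLp 2).integrable_norm_pow two_ne_zero).const_mul _)
          (.of_forall fun ξ => ?_)
        by_cases hξ : 𝓕 f ξ = 0
        · simp [hξ]
        · dsimp only
          gcongr
          exact hf ξ hξ
    _ = M ^ 2 * ∫ x, ‖f x‖ ^ 2 := by rw [integral_const_mul, integral_norm_sq_fourier]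

end Bernstein

theorem pow_mul_norm_sq_le_of_fourier_support {V : Type*} [NormedAddCommGroup V]
    [InnerProductSpace ℝ V] [FiniteDimensional ℝ V] [MeasurableSpace V] [BorelSpace V]
    [Nontrivial V] (f : 𝓢(V, ℂ)) (hf : ∀ x y : V, ‖x‖ = ‖y‖ → f x = f y) {N : ℝ} (hN : 0 < N)
    (hsupp : ∀ ξ, 𝓕 f ξ ≠ 0 → 2 * π * ‖ξ‖ ≤ N) (x : V) :
    Module.finrank ℝ V * volume.real (Metric.ball (0 : V) 1) *
        (‖x‖ ^ (Module.finrank ℝ V - 1) * ‖f x‖ ^ 2) ≤ 2 * N * ∫ y, ‖f y‖ ^ 2 :=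
  calc _ ≤ N * (∫ y, ‖f y‖ ^ 2) + N⁻¹ * ∫ y, ‖fderiv ℝ f y‖ ^ 2 :=
        f.pow_mul_norm_sq_le_of_norm_eq volume hf hN x
    _ ≤ N * (∫ y, ‖f y‖ ^ 2) + N⁻¹ * (N ^ 2 * ∫ y, ‖f y‖ ^ 2) := by
        gcongr
        exact f.integral_norm_sq_fderiv_le_of_fourier_support hsupp
    _ = 2 * N * ∫ y, ‖f y‖ ^ 2 := by field_simp; ring

end SchwartzMap

theorem fourierT_two_pi_smul {d : ℕ} (f : EuclideanSpace ℝ (Fin d) → ℂ)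
    (ξ : EuclideanSpace ℝ (Fin d)) :
    fourierT f ((2 * π) • ξ) = ((2 * π) ^ (-(d : ℝ) / 2) : ℝ) • 𝓕 f ξ := by
  rw [fourierT, Real.fourier_eq']
  congr 2 with x
  rw [smul_eq_mul]
  congr 2
  have : ∑ i, x i * ((2 * π) • ξ) i = 2 * π * inner ℝ x ξ := by
    simp only [PiLp.smul_apply, smul_eq_mul, PiLp.inner_apply, RCLike.inner_apply, conj_trivial,
      Finset.mul_sum]
    exact Finset.sum_congr rfl fun i _ => by ring
  rw [this]
  push_cast
  ring

theorem two_pi_mul_norm_le_of_fourierT_support {d : ℕ} {f : EuclideanSpace ℝ (Fin d) → ℂ}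
    {N : ℝ} (hf : ∀ ξ, fourierT f ξ ≠ 0 → ‖ξ‖ ≤ N) (ξ : EuclideanSpace ℝ (Fin d))
    (hξ : 𝓕 f ξ ≠ 0) : 2 * π * ‖ξ‖ ≤ N := by
  have h := hf ((2 * π) • ξ) (by
    rw [fourierT_two_pi_smul]
    exact smul_ne_zero (by positivity) hξ)
  rwa [norm_smul, Real.norm_of_nonneg (by positivity)] at h

/-- Bernstein-type endpoint radial Sobolev embedding: if `f` is spherically symmetric
with Fourier support in `{|ξ| ≤ N}`, then `|x|^{(d-1)/2} |f(x)| ≤ C N^{1/2} ‖f‖_{L²}`. -/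
theorem radial_bernstein_embedding (d : ℕ) (hd : 1 ≤ d) :
    ∃ C : ℝ, 0 < C ∧
      ∀ (N : ℝ), 0 < N →
        ∀ f : SchwartzMap (EuclideanSpace ℝ (Fin d)) ℂ,
          (∀ x y : EuclideanSpace ℝ (Fin d), ‖x‖ = ‖y‖ → f x = f y) →
          (∀ ξ : EuclideanSpace ℝ (Fin d), fourierT (⇑f) ξ ≠ 0 → ‖ξ‖ ≤ N) →
          ∀ x : EuclideanSpace ℝ (Fin d),
            ‖x‖ ^ (((d : ℝ) - 1) / 2) * ‖f x‖ ≤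
              C * N ^ ((1 : ℝ) / 2) *
                (∫ y : EuclideanSpace ℝ (Fin d), ‖f y‖ ^ 2) ^ ((1 : ℝ) / 2) := by
  have : Nontrivial (EuclideanSpace ℝ (Fin d)) :=
    Module.nontrivial_of_finrank_pos (by rw [finrank_euclideanSpace_fin]; omega)
  set κ := (d : ℝ) * volume.real (Metric.ball (0 : EuclideanSpace ℝ (Fin d)) 1)
  have hκ : 0 < κ := mul_pos (by exact_mod_cast hd)
    (ENNReal.toReal_pos (Metric.measure_ball_pos volume 0 one_pos).ne' measure_ball_lt_top.ne)
  refine ⟨(2 / κ) ^ (1 / 2 : ℝ), by positivity, fun N hN f hf hsupp x => ?_⟩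
  set I := ∫ y, ‖f y‖ ^ 2
  have hI : 0 ≤ I := integral_nonneg fun _ => by positivity
  have hsq := f.pow_mul_norm_sq_le_of_fourier_support hf hN
    (two_pi_mul_norm_le_of_fourierT_support hsupp) x
  rw [finrank_euclideanSpace_fin, ← le_div_iff₀' hκ, mul_div_right_comm, mul_div_right_comm]
    at hsq
  have hx : (‖x‖ ^ (d - 1)) ^ (1 / 2 : ℝ) = ‖x‖ ^ (((d : ℝ) - 1) / 2) := by
    rw [← Real.rpow_natCast, ← Real.rpow_mul (norm_nonneg _), Nat.cast_sub hd, Nat.cast_one,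
      mul_one_div]
  have hfx : (‖f x‖ ^ 2) ^ (1 / 2 : ℝ) = ‖f x‖ := by
    rw [← Real.sqrt_eq_rpow, Real.sqrt_sq (norm_nonneg _)]
  calc ‖x‖ ^ (((d : ℝ) - 1) / 2) * ‖f x‖ = (‖x‖ ^ (d - 1) * ‖f x‖ ^ 2) ^ (1 / 2 : ℝ) := by
        rw [Real.mul_rpow (by positivity) (by positivity), hx, hfx]
    _ ≤ (2 / κ * N * I) ^ (1 / 2 : ℝ) := by gcongr
    _ = _ := by rw [Real.mul_rpow (by positivity) hI, Real.mul_rpow (by positivity) hN.le]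
end
end

section
/- There exists a constant C > 0 such that for every real r ≥ 1 one has |∫_0^{2π} e^{i r cos θ} dθ| ≤ C r^{-1/2}; that is, the Bessel function J₀(r) = (2π)^{-1} ∫_0^{2π} e^{i r cos θ} dθ obeys the decay bound |J₀(r)| ≤ C r^{-1/2} for r ≥ 1. -/
/-!
By the symmetries `θ ↦ 2π - θ` and `θ ↦ π - θ`, the integral over `[0, 2π]` is bounded by four
times the quarter-period integral of `e^{-i r cos θ}`. On `[0, δ]`, around the stationary point of
the phase, the integrand is bounded by `1`; on `[δ, π/2]` the phase derivative `r sin θ` is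
increasing and at least `r sin δ ≥ 2 r δ / π`, so van der Corput's lemma gives `π / (r δ)`.
The choice `δ = r^{-1/2}` balances the two contributions.
-/

open MeasureTheory Set Complex
open scoped ComplexConjugate Interval Real

theorem norm_integral_neg_div_sq_smul_le {E : Type*} [NormedAddCommGroup E] [NormedSpace ℝ E]
    {g : ℝ → E} {φ' φ'' : ℝ → ℝ} {a b : ℝ} (hab : a ≤ b) (hg : ∀ x, ‖g x‖ ≤ 1)
    (hφ' : ∀ x ∈ Icc a b, HasDerivAt φ' (φ'' x) x)
    (hφ''_cont : ContinuousOn φ'' (Icc a b))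
    (hφ''_nonneg : ∀ x ∈ Icc a b, 0 ≤ φ'' x)
    (hφ'_pos : ∀ x ∈ Icc a b, 0 < φ' x) :
    ‖∫ x in a..b, (-φ'' x / φ' x ^ 2) • g x‖ ≤ (φ' a)⁻¹ - (φ' b)⁻¹ := by
  rw [← uIcc_of_le hab] at hφ' hφ''_cont hφ''_nonneg hφ'_pos
  have hφ'_cont : ContinuousOn φ' [[a, b]] := fun x hx =>
    (hφ' x hx).continuousAt.continuousWithinAt
  have hdens_cont : ContinuousOn (fun x => φ'' x / φ' x ^ 2) [[a, b]] :=
    hφ''_cont.div (hφ'_cont.pow 2) fun x hx => (pow_pos (hφ'_pos x hx) 2).ne'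
  have hprim : ∀ x ∈ [[a, b]], HasDerivAt (fun x => -(φ' x)⁻¹) (φ'' x / φ' x ^ 2) x :=
    fun x hx => by
      simpa only [neg_div, neg_neg] using ((hφ' x hx).fun_inv (hφ'_pos x hx).ne').fun_neg
  calc ‖∫ x in a..b, (-φ'' x / φ' x ^ 2) • g x‖ ≤ ∫ x in a..b, φ'' x / φ' x ^ 2 := by
        refine intervalIntegral.norm_integral_le_of_norm_le hab (ae_of_all _ fun x hx => ?_)
          hdens_cont.intervalIntegrable
        have hx' : x ∈ [[a, b]] := by
          rw [uIcc_of_le hab]; exact Ioc_subset_Icc_self hx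
        rw [norm_smul, Real.norm_eq_abs, neg_div, abs_neg,
          abs_of_nonneg (div_nonneg (hφ''_nonneg x hx') (sq_nonneg _))]
        exact mul_le_of_le_one_right (div_nonneg (hφ''_nonneg x hx') (sq_nonneg _)) (hg x)
    _ = (φ' a)⁻¹ - (φ' b)⁻¹ := by
        rw [intervalIntegral.integral_eq_sub_of_hasDerivAt hprim hdens_cont.intervalIntegrable]
        ring

/-- Van der Corput's first-derivative estimate, via integration by parts against `1 / φ'`. -/
theorem norm_integral_cexp_mul_I_le_of_deriv_pos {φ φ' φ'' : ℝ → ℝ} {a b : ℝ} (hab : a ≤ b)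
    (hφ : ∀ x ∈ Icc a b, HasDerivAt φ (φ' x) x)
    (hφ' : ∀ x ∈ Icc a b, HasDerivAt φ' (φ'' x) x)
    (hφ''_cont : ContinuousOn φ'' (Icc a b))
    (hφ''_nonneg : ∀ x ∈ Icc a b, 0 ≤ φ'' x)
    (hφ'_pos : ∀ x ∈ Icc a b, 0 < φ' x) :
    ‖∫ x in a..b, cexp (φ x * I)‖ ≤ 2 / φ' a := by
  have hrem := norm_integral_neg_div_sq_smul_le hab (g := fun x => cexp (φ x * I))
    (fun x => (norm_exp_ofReal_mul_I (φ x)).le) hφ' hφ''_cont hφ''_nonneg hφ'_pos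
  rw [← uIcc_of_le hab] at hφ hφ' hφ''_cont hφ'_pos
  set e : ℝ → ℂ := fun x => cexp (φ x * I)
  have hnorm_e (x : ℝ) : ‖e x‖ = 1 := norm_exp_ofReal_mul_I (φ x)
  have he : ∀ x ∈ [[a, b]], HasDerivAt e (e x * (φ' x * I)) x := fun x hx =>
    ((hφ x hx).ofReal_comp.mul_const I).cexp
  have hinv : ∀ x ∈ [[a, b]], HasDerivAt (fun x => (φ' x)⁻¹) (-φ'' x / φ' x ^ 2) x :=
    fun x hx => (hφ' x hx).fun_inv (hφ'_pos x hx).ne'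
  have hφ'_cont : ContinuousOn φ' [[a, b]] := fun x hx =>
    (hφ' x hx).continuousAt.continuousWithinAt
  have he_cont : ContinuousOn e [[a, b]] := fun x hx =>
    (he x hx).continuousAt.continuousWithinAt
  have hibp := intervalIntegral.integral_smul_deriv_eq_deriv_smul hinv he
    (ContinuousOn.intervalIntegrable <| hφ''_cont.neg.div (hφ'_cont.pow 2) fun x hx =>
      (pow_pos (hφ'_pos x hx) 2).ne')
    (ContinuousOn.intervalIntegrable <| he_cont.mul <|
      (continuous_ofReal.comp_continuousOn hφ'_cont).mul continuousOn_const)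
  have hlhs : ∫ x in a..b, (φ' x)⁻¹ • (e x * (φ' x * I)) = I * ∫ x in a..b, e x := by
    rw [← intervalIntegral.integral_const_mul]
    refine intervalIntegral.integral_congr fun x hx => ?_
    have : (φ' x : ℂ) ≠ 0 := ofReal_ne_zero.2 (hφ'_pos x hx).ne'
    simp only [real_smul, ofReal_inv]
    field_simp
  have hboundary : ‖(φ' b)⁻¹ • e b - (φ' a)⁻¹ • e a‖ ≤ (φ' b)⁻¹ + (φ' a)⁻¹ := by
    refine (norm_sub_le _ _).trans_eq ?_
    simp only [norm_smul, hnorm_e, mul_one, norm_inv, Real.norm_of_nonneg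
      (hφ'_pos a left_mem_uIcc).le, Real.norm_of_nonneg (hφ'_pos b right_mem_uIcc).le]
  calc ‖∫ x in a..b, e x‖ = ‖I * ∫ x in a..b, e x‖ := by rw [norm_mul, norm_I, one_mul]
    _ = ‖(φ' b)⁻¹ • e b - (φ' a)⁻¹ • e a - ∫ x in a..b, (-φ'' x / φ' x ^ 2) • e x‖ := by
        rw [← hlhs, hibp]
    _ ≤ (φ' b)⁻¹ + (φ' a)⁻¹ + ((φ' a)⁻¹ - (φ' b)⁻¹) :=
        (norm_sub_le _ _).trans (add_le_add hboundary hrem)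
    _ = 2 / φ' a := by ring

theorem integral_comp_cos_zero_two_pi {E : Type*} [NormedAddCommGroup E] [NormedSpace ℝ E]
    {F : ℝ → E} (hF : Continuous F) :
    ∫ θ in 0..2 * π, F (Real.cos θ) =
      (2 : ℝ) • ((∫ θ in 0..π / 2, F (Real.cos θ)) + ∫ θ in 0..π / 2, F (-Real.cos θ)) := by
  have hint (a b : ℝ) : IntervalIntegrable (fun θ => F (Real.cos θ)) volume a b :=
    (hF.comp Real.continuous_cos).intervalIntegrable a b
  have hreflect_two_pi : ∫ θ in π..2 * π, F (Real.cos θ) = ∫ θ in 0..π, F (Real.cos θ) := by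
    have := intervalIntegral.integral_comp_sub_left (fun θ => F (Real.cos θ)) (a := 0) (b := π)
      (2 * π)
    simp only [Real.cos_two_pi_sub, sub_zero, show 2 * π - π = π by ring] at this
    exact this.symm
  have hreflect_pi : ∫ θ in π / 2..π, F (Real.cos θ) = ∫ θ in 0..π / 2, F (-Real.cos θ) := by
    have := intervalIntegral.integral_comp_sub_left (fun θ => F (Real.cos θ)) (a := 0)
      (b := π / 2) π
    simp only [Real.cos_pi_sub, sub_zero, sub_half] at this
    exact this.symm
  rw [← intervalIntegral.integral_add_adjacent_intervals (hint 0 π) (hint π (2 * π)),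
    hreflect_two_pi, ← intervalIntegral.integral_add_adjacent_intervals (hint 0 (π / 2))
      (hint (π / 2) π), hreflect_pi, two_smul]

theorem norm_integral_cexp_cos_le_four_mul (r : ℝ) :
    ‖∫ θ in 0..2 * π, cexp (I * r * Real.cos θ)‖ ≤
      4 * ‖∫ θ in 0..π / 2, cexp ((-(r * Real.cos θ) : ℝ) * I)‖ := by
  set B := ∫ θ in 0..π / 2, cexp ((-(r * Real.cos θ) : ℝ) * I)
  have hB : ∫ θ in 0..π / 2, cexp (I * r * ((-Real.cos θ : ℝ) : ℂ)) = B :=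
    intervalIntegral.integral_congr fun θ _ => by push_cast; ring_nf
  have hA : ∫ θ in 0..π / 2, cexp (I * r * Real.cos θ) = conj B := by
    rw [← intervalIntegral.intervalIntegral_conj]
    refine intervalIntegral.integral_congr fun θ _ => ?_
    rw [← Complex.exp_conj, map_mul, conj_ofReal, conj_I]
    push_cast
    ring_nf
  rw [integral_comp_cos_zero_two_pi (F := fun t : ℝ => cexp (I * r * t)) (by fun_prop), hB, hA]
  calc ‖(2 : ℝ) • (conj B + B)‖ ≤ 2 * (‖conj B‖ + ‖B‖) := by
        rw [norm_smul, Real.norm_two]; gcongr; exact norm_add_le _ _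
    _ = 4 * ‖B‖ := by rw [RCLike.norm_conj]; ring

theorem norm_integral_cexp_neg_cos_le {r δ : ℝ} (hr : 0 < r) (hδ : 0 < δ) (hδπ : δ ≤ π / 2) :
    ‖∫ θ in 0..π / 2, cexp ((-(r * Real.cos θ) : ℝ) * I)‖ ≤ δ + 2 / (r * Real.sin δ) := by
  have hint (a b : ℝ) :
      IntervalIntegrable (fun θ => cexp ((-(r * Real.cos θ) : ℝ) * I)) volume a b :=
    Continuous.intervalIntegrable (by fun_prop) a b
  have hnear : ‖∫ θ in 0..δ, cexp ((-(r * Real.cos θ) : ℝ) * I)‖ ≤ δ := by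
    refine (intervalIntegral.norm_integral_le_of_norm_le_const fun θ _ =>
      (norm_exp_ofReal_mul_I (-(r * Real.cos θ))).le).trans_eq ?_
    rw [one_mul, sub_zero, abs_of_pos hδ]
  have hfar : ‖∫ θ in δ..π / 2, cexp ((-(r * Real.cos θ) : ℝ) * I)‖ ≤ 2 / (r * Real.sin δ) :=
    norm_integral_cexp_mul_I_le_of_deriv_pos (φ' := fun θ => r * Real.sin θ)
      (φ'' := fun θ => r * Real.cos θ) hδπ
      (fun θ _ => by simpa using ((Real.hasDerivAt_cos θ).const_mul r).fun_neg)
      (fun θ _ => (Real.hasDerivAt_sin θ).const_mul r) (by fun_prop)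
      (fun θ hθ => mul_nonneg hr.le (Real.cos_nonneg_of_mem_Icc ⟨by linarith [hθ.1], hθ.2⟩))
      (fun θ hθ => mul_pos hr <| Real.sin_pos_of_pos_of_lt_pi (hδ.trans_le hθ.1)
        (by linarith [hθ.2, Real.pi_pos]))
  rw [← intervalIntegral.integral_add_adjacent_intervals (hint 0 δ) (hint δ (π / 2))]
  exact (norm_add_le _ _).trans (add_le_add hnear hfar)

/-- Decay of the Bessel function `J₀`: for `r ≥ 1`,
`|∫_0^{2π} e^{i r cos θ} dθ| ≤ C r^{-1/2}`. -/
theorem bessel_J0_decay :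
    ∃ C : ℝ, 0 < C ∧
      ∀ r : ℝ, 1 ≤ r →
        ‖∫ θ in (0 : ℝ)..(2 * Real.pi),
            Complex.exp (Complex.I * (r : ℂ) * (Real.cos θ : ℂ))‖ ≤ C * r ^ (-(1 : ℝ) / 2) := by
  refine ⟨4 * (1 + π), by positivity, fun r hr => ?_⟩
  have hr0 : 0 < r := one_pos.trans_le hr
  set δ := r ^ (-(1 : ℝ) / 2)
  have hδ_pos : 0 < δ := Real.rpow_pos_of_pos hr0 _
  have hδ_le : δ ≤ π / 2 := (Real.rpow_le_one_of_one_le_of_nonpos hr (by norm_num)).trans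
    (by linarith [Real.pi_gt_three])
  have hrδδ : r * δ * δ = 1 := by
    rw [mul_assoc, ← Real.rpow_add hr0, show -(1 : ℝ) / 2 + -(1 : ℝ) / 2 = -1 by norm_num,
      Real.rpow_neg_one, mul_inv_cancel₀ hr0.ne']
  have htail : 2 / (r * Real.sin δ) ≤ π * δ := by
    have hsin : 2 / π * δ ≤ Real.sin δ := Real.mul_le_sin hδ_pos.le hδ_le
    rw [div_le_iff₀ (mul_pos hr0 ((by positivity : 0 < 2 / π * δ).trans_le hsin))]
    calc (2 : ℝ) = π * δ * (r * (2 / π * δ)) := by field_simp; linarith [hrδδ]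
      _ ≤ π * δ * (r * Real.sin δ) := by gcongr
  calc _ ≤ 4 * ‖∫ θ in 0..π / 2, cexp ((-(r * Real.cos θ) : ℝ) * I)‖ :=
        norm_integral_cexp_cos_le_four_mul r
    _ ≤ 4 * (δ + 2 / (r * Real.sin δ)) := by
        gcongr; exact norm_integral_cexp_neg_cos_le hr0 hδ_pos hδ_le
    _ ≤ 4 * (1 + π) * δ := by linarith
end
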